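/- arXiv:2102.06752 — 3 statements merged into one kernel-verified Lean document; each statement's English description precedes it below -/
import Mathlib

section
/- Let F : ℝ^p → ℝ be differentiable with L-Lipschitz gradient and bounded below by F*. Consider the recursion x_{t+1} = x_t − α·v_t with deterministic vectors v_t ∈ ℝ^p, where 0 < α ≤ 1/(2L). Then for every T ≥ 0: Σ_{t=0}^{T} ‖∇F(x_t)‖² ≤ 2(F(x_0) − F*)/α − (1/2)·Σ_{t=0}^{T} ‖v_t‖² + 2·Σ_{t=0}^{T} ‖v_t − ∇F(x_t)‖². -/
/-!
By the descent lemma, a step `x ↦ x - α • v` decreases `F` by at least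
`α ⟪∇F x, v⟫ - (L α² / 2) ‖v‖²`. Polarizing `2 ⟪g, v⟫ = ‖g‖² + ‖v‖² - ‖v - g‖²` and using
`L α ≤ 1 / 2` turns this into a bound on `‖∇F x‖²` by the decrease of `F`, which telescopes along
the iterates and is controlled by `F (x 0) - F*`.
-/

open Finset RealInnerProductSpace

section Descent

variable {E : Type*} [NormedAddCommGroup E] [InnerProductSpace ℝ E] [CompleteSpace E]
  {F : E → ℝ}

lemma hasDerivAt_comp_add_smul {x d : E} {t : ℝ} (hF : DifferentiableAt ℝ F (x + t • d)) :
    HasDerivAt (fun s : ℝ => F (x + s • d)) ⟪gradient F (x + t • d), d⟫ t := by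
  have hline : HasDerivAt (fun s : ℝ => x + s • d) d t := by
    simpa using ((hasDerivAt_id t).smul_const d).const_add x
  exact hF.hasGradientAt.hasFDerivAt.comp_hasDerivAt t hline

lemma inner_gradient_sub_le_of_lipschitz {L : ℝ}
    (hlip : ∀ a b : E, ‖gradient F a - gradient F b‖ ≤ L * ‖a - b‖) (x d : E) {t : ℝ}
    (ht : 0 ≤ t) :
    ⟪gradient F (x + t • d) - gradient F x, d⟫ ≤ L * t * ‖d‖ ^ 2 :=
  calc ⟪gradient F (x + t • d) - gradient F x, d⟫
      ≤ ‖gradient F (x + t • d) - gradient F x‖ * ‖d‖ := real_inner_le_norm _ _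
    _ ≤ L * ‖x + t • d - x‖ * ‖d‖ := by gcongr; exact hlip _ _
    _ = L * t * ‖d‖ ^ 2 := by
      rw [add_sub_cancel_left, norm_smul, Real.norm_of_nonneg ht]; ring

theorem le_add_inner_gradient_add_sq {L : ℝ} (hF : Differentiable ℝ F)
    (hlip : ∀ a b : E, ‖gradient F a - gradient F b‖ ≤ L * ‖a - b‖) (x y : E) :
    F y ≤ F x + ⟪gradient F x, y - x⟫ + L / 2 * ‖y - x‖ ^ 2 := by
  set d := y - x
  let ψ : ℝ → ℝ := fun t => F (x + t • d) - t * ⟪gradient F x, d⟫ - L / 2 * t ^ 2 * ‖d‖ ^ 2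
  have hψ : ∀ t : ℝ, HasDerivAt ψ
      (⟪gradient F (x + t • d) - gradient F x, d⟫ - L * t * ‖d‖ ^ 2) t := by
    intro t
    have hquad : HasDerivAt (fun s : ℝ => L / 2 * s ^ 2 * ‖d‖ ^ 2) (L * t * ‖d‖ ^ 2) t :=
      (((hasDerivAt_pow 2 t).const_mul (L / 2)).mul_const _).congr_deriv (by ring)
    rw [inner_sub_left]
    exact ((hasDerivAt_comp_add_smul (x := x) (d := d) (hF _)).sub
      (hasDerivAt_mul_const _)).sub hquad
  have hanti : AntitoneOn ψ (Set.Icc 0 1) := by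
    refine antitoneOn_of_deriv_nonpos (convex_Icc 0 1)
      (HasDerivAt.continuousOn fun t _ => hψ t)
      (fun t _ => (hψ t).differentiableAt.differentiableWithinAt) fun t ht => ?_
    rw [interior_Icc] at ht
    rw [(hψ t).deriv, sub_nonpos]
    exact inner_gradient_sub_le_of_lipschitz hlip x d ht.1.le
  have h01 : ψ 1 ≤ ψ 0 := hanti (by norm_num) (by norm_num) zero_le_one
  simp only [ψ, one_smul, add_sub_cancel, zero_smul, add_zero, d] at h01
  linarith

lemma sq_norm_gradient_le_of_step {L α : ℝ} (hF : Differentiable ℝ F)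
    (hlip : ∀ a b : E, ‖gradient F a - gradient F b‖ ≤ L * ‖a - b‖)
    (hα : 0 < α) (hLα : L * α ≤ 1 / 2) (x v : E) :
    ‖gradient F x‖ ^ 2 ≤
      2 * (F x - F (x - α • v)) / α - 1 / 2 * ‖v‖ ^ 2 + ‖v - gradient F x‖ ^ 2 := by
  have hdesc := le_add_inner_gradient_add_sq hF hlip x (x - α • v)
  rw [sub_sub_cancel_left, inner_neg_right, real_inner_smul_right, norm_neg, norm_smul,
    Real.norm_of_nonneg hα.le] at hdesc
  set g := gradient F x
  have hpolar : 2 * ⟪g, v⟫ = ‖g‖ ^ 2 + ‖v‖ ^ 2 - ‖v - g‖ ^ 2 := by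
    rw [norm_sub_sq_real, real_inner_comm]; ring
  have hquad : α * (L * α * ‖v‖ ^ 2) ≤ α * (1 / 2 * ‖v‖ ^ 2) := by gcongr
  have hdecrease : ‖g‖ ^ 2 + 1 / 2 * ‖v‖ ^ 2 - ‖v - g‖ ^ 2 ≤ 2 * (F x - F (x - α • v)) / α := by
    rw [le_div_iff₀ hα]
    have hpolar' : α * (2 * ⟪g, v⟫) = α * (‖g‖ ^ 2 + ‖v‖ ^ 2 - ‖v - g‖ ^ 2) := by rw [hpolar]
    linarith
  linarith

end Descent

theorem stmt_3_general {p : ℕ} (F : EuclideanSpace ℝ (Fin p) → ℝ) (L Fstar α : ℝ)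
    (hdiff : Differentiable ℝ F)
    (hlip : ∀ a b : EuclideanSpace ℝ (Fin p),
      ‖gradient F a - gradient F b‖ ≤ L * ‖a - b‖)
    (hbelow : ∀ z, Fstar ≤ F z)
    (x v : ℕ → EuclideanSpace ℝ (Fin p))
    (hup : ∀ t, x (t + 1) = x t - α • v t)
    (hα0 : 0 < α) (hα : α ≤ 1 / (2 * L)) :
    ∀ T : ℕ,
      ∑ t ∈ Finset.range (T + 1), ‖gradient F (x t)‖ ^ 2 ≤
        2 * (F (x 0) - Fstar) / α
          - (1 / 2) * ∑ t ∈ Finset.range (T + 1), ‖v t‖ ^ 2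
          + 2 * ∑ t ∈ Finset.range (T + 1), ‖v t - gradient F (x t)‖ ^ 2 := by
  intro T
  have hLα : L * α ≤ 1 / 2 := by
    rcases le_or_gt L 0 with hL | hL
    · nlinarith
    · rw [le_div_iff₀ (by positivity)] at hα
      linarith
  have hsum := sum_le_sum fun t (_ : t ∈ range (T + 1)) =>
    sq_norm_gradient_le_of_step hdiff hlip hα0 hLα (x t) (v t)
  simp only [← hup] at hsum
  rw [sum_add_distrib, sum_sub_distrib, ← sum_div, ← mul_sum, ← mul_sum,
    sum_range_sub' fun t => F (x t)] at hsum
  have hdecrease : 2 * (F (x 0) - F (x (T + 1))) / α ≤ 2 * (F (x 0) - Fstar) / α := by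
    gcongr; exact hbelow _
  have herr : 0 ≤ ∑ t ∈ range (T + 1), ‖v t - gradient F (x t)‖ ^ 2 := by positivity
  linarith

theorem stmt_3 {p : ℕ} (F : EuclideanSpace ℝ (Fin p) → ℝ) (L Fstar α : ℝ)
    (hL : 0 < L) (hdiff : Differentiable ℝ F)
    (hlip : ∀ a b : EuclideanSpace ℝ (Fin p),
      ‖gradient F a - gradient F b‖ ≤ L * ‖a - b‖)
    (hbelow : ∀ z, Fstar ≤ F z)
    (x v : ℕ → EuclideanSpace ℝ (Fin p))
    (hup : ∀ t, x (t + 1) = x t - α • v t)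
    (hα0 : 0 < α) (hα : α ≤ 1 / (2 * L)) :
    ∀ T : ℕ,
      ∑ t ∈ Finset.range (T + 1), ‖gradient F (x t)‖ ^ 2 ≤
        2 * (F (x 0) - Fstar) / α
          - (1 / 2) * ∑ t ∈ Finset.range (T + 1), ‖v t‖ ^ 2
          + 2 * ∑ t ∈ Finset.range (T + 1), ‖v t - gradient F (x t)‖ ^ 2 :=
  stmt_3_general F L Fstar α hdiff hlip hbelow x v hup hα0 hα
end

section
/- Consensus error contraction (variant 1): let W ∈ ℝ^{np×np} satisfy ‖Wz − Jz‖ ≤ λ‖z − Jz‖ for all z, with JW = J, J² = J, where λ ∈ [0,1). If x⁺ = W(x − α·y), then ‖x⁺ − J·x⁺‖² ≤ ((1+λ²)/2)·‖x − Jx‖² + (2α²λ²/(1−λ²))·‖y − Jy‖². -/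
/-!
Since `J W = J`, the disagreement of `x⁺` is `W z - J z` with `z = x - α y`, so it is at most
`λ ‖z - J z‖`, and `z - J z = (x - J x) - α (y - J y)` by linearity. Young's inequality
`‖a - b‖² ≤ (1 + η) ‖a‖² + (1 + η⁻¹) ‖b‖²` with `η = (1 - λ²) / (2 λ²)` then gives the
coefficients `λ² (1 + η) = (1 + λ²) / 2` and `λ² (1 + η⁻¹) = λ² (1 + λ²) / (1 - λ²) ≤ 2 λ² / (1 - λ²)`.
-/

lemma add_sq_le_young (a b : ℝ) {η : ℝ} (hη : 0 < η) :
    (a + b) ^ 2 ≤ (1 + η) * a ^ 2 + (1 + η⁻¹) * b ^ 2 := by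
  have key : (1 + η) * a ^ 2 + (1 + η⁻¹) * b ^ 2 - (a + b) ^ 2 = (η * a - b) ^ 2 / η := by
    field_simp
    ring
  have : 0 ≤ (η * a - b) ^ 2 / η := by positivity
  linarith

lemma norm_sub_sq_le_young {E : Type*} [SeminormedAddCommGroup E] (a b : E) {η : ℝ} (hη : 0 < η) :
    ‖a - b‖ ^ 2 ≤ (1 + η) * ‖a‖ ^ 2 + (1 + η⁻¹) * ‖b‖ ^ 2 :=
  (pow_le_pow_left₀ (norm_nonneg _) (norm_sub_le a b) 2).trans (add_sq_le_young _ _ hη)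

lemma exists_young_param_of_lt_one {lam : ℝ} (hlam0 : 0 ≤ lam) (hlam1 : lam < 1) :
    ∃ η > 0, lam ^ 2 * (1 + η) ≤ (1 + lam ^ 2) / 2 ∧
      lam ^ 2 * (1 + η⁻¹) ≤ 2 * lam ^ 2 / (1 - lam ^ 2) := by
  have hgap : 0 < 1 - lam ^ 2 := by nlinarith
  rcases hlam0.eq_or_lt with rfl | hpos
  · -- the paper's `η` degenerates at `λ = 0`, where any `η > 0` works
    exact ⟨1, one_pos, by norm_num, by norm_num⟩
  refine ⟨(1 - lam ^ 2) / (2 * lam ^ 2), by positivity, le_of_eq ?_, ?_⟩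
  · field_simp
    ring
  · rw [inv_div, le_div_iff₀ hgap]
    field_simp
    nlinarith [pow_pos hpos 4]

lemma norm_sub_map_sq_le {E : Type*} [SeminormedAddCommGroup E] [Module ℝ E] [NormSMulClass ℝ E]
    (W J : E →ₗ[ℝ] E) (hJW : ∀ z, J (W z) = J z) {lam : ℝ}
    (hcontr : ∀ z, ‖W z - J z‖ ≤ lam * ‖z - J z‖) (α : ℝ) (x y : E) {η : ℝ} (hη : 0 < η) :
    ‖W (x - α • y) - J (W (x - α • y))‖ ^ 2 ≤
      lam ^ 2 * (1 + η) * ‖x - J x‖ ^ 2 + lam ^ 2 * (1 + η⁻¹) * (α ^ 2 * ‖y - J y‖ ^ 2) := by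
  set z := x - α • y
  have hsplit : z - J z = (x - J x) - α • (y - J y) := by
    simp only [z, map_sub, map_smul]
    module
  calc ‖W z - J (W z)‖ ^ 2 ≤ (lam * ‖z - J z‖) ^ 2 := by
        rw [hJW]
        exact pow_le_pow_left₀ (norm_nonneg _) (hcontr z) 2
    _ = lam ^ 2 * ‖(x - J x) - α • (y - J y)‖ ^ 2 := by rw [mul_pow, hsplit]
    _ ≤ lam ^ 2 * ((1 + η) * ‖x - J x‖ ^ 2 + (1 + η⁻¹) * ‖α • (y - J y)‖ ^ 2) := by
        gcongr
        exact norm_sub_sq_le_young _ _ hη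
    _ = _ := by
        rw [norm_smul, mul_pow, Real.norm_eq_abs, sq_abs]
        ring

theorem stmt_7_general {E : Type*} [NormedAddCommGroup E] [InnerProductSpace ℝ E]
    (W J : E →L[ℝ] E)
    (hJW : ∀ z, J (W z) = J z)
    (lam : ℝ) (hlam0 : 0 ≤ lam) (hlam1 : lam < 1)
    (hcontr : ∀ z, ‖W z - J z‖ ≤ lam * ‖z - J z‖)
    (α : ℝ) (x y xp : E) (hup : xp = W (x - α • y)) :
    ‖xp - J xp‖ ^ 2 ≤ ((1 + lam ^ 2) / 2) * ‖x - J x‖ ^ 2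
      + (2 * α ^ 2 * lam ^ 2 / (1 - lam ^ 2)) * ‖y - J y‖ ^ 2 := by
  obtain ⟨η, hη, hcoef_x, hcoef_y⟩ := exists_young_param_of_lt_one hlam0 hlam1
  subst hup
  calc ‖W (x - α • y) - J (W (x - α • y))‖ ^ 2
      ≤ lam ^ 2 * (1 + η) * ‖x - J x‖ ^ 2 + lam ^ 2 * (1 + η⁻¹) * (α ^ 2 * ‖y - J y‖ ^ 2) :=
        norm_sub_map_sq_le W.toLinearMap J.toLinearMap hJW hcontr α x y hη
    _ ≤ (1 + lam ^ 2) / 2 * ‖x - J x‖ ^ 2 + 2 * lam ^ 2 / (1 - lam ^ 2) * (α ^ 2 * ‖y - J y‖ ^ 2) := by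
        gcongr
    _ = _ := by ring

theorem stmt_7 {E : Type*} [NormedAddCommGroup E] [InnerProductSpace ℝ E]
    (W J : E →L[ℝ] E)
    (hJW : ∀ z, J (W z) = J z) (hWJ : ∀ z, W (J z) = J z)
    (hJJ : ∀ z, J (J z) = J z)
    (lam : ℝ) (hlam0 : 0 ≤ lam) (hlam1 : lam < 1)
    (hcontr : ∀ z, ‖W z - J z‖ ≤ lam * ‖z - J z‖)
    (α : ℝ) (x y xp : E) (hup : xp = W (x - α • y)) :
    ‖xp - J xp‖ ^ 2 ≤ ((1 + lam ^ 2) / 2) * ‖x - J x‖ ^ 2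
      + (2 * α ^ 2 * lam ^ 2 / (1 - lam ^ 2)) * ‖y - J y‖ ^ 2 :=
  stmt_7_general W J hJW lam hlam0 hlam1 hcontr α x y xp hup
end

section
/- Hybrid estimator mean-square recursion (scalar abstraction): let e_t = v_t − m_t be random vectors with v_t = β·g_t + (1−β)(g_t − h_t + v_{t-1}) where E[g_t | 𝓕_t] = m_t, E[g_t − h_t | 𝓕_t] = m_t − m_{t-1}, and v_{t-1}, m_{t-1}, m_t are 𝓕_t-measurable. Then E[‖v_t − m_t‖² | 𝓕_t] ≤ (1−β)²·‖v_{t-1} − m_{t-1}‖² + 2β²·E[‖g_t − m_t‖² | 𝓕_t] + 2(1−β)²·E[‖g_t − h_t‖² | 𝓕_t]. -/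
/-!
Split `v - mt = (1 - β) • (vtm - mtm) + N` with the noise
`N = β • (g - mt) + (1 - β) • ((g - h) - (mt - mtm))`, which has zero conditional mean while the
first summand is `mF`-measurable. Pulling that summand out of the conditional expectation kills the
cross term, so `E[‖v - mt‖² | mF] = (1 - β)² ‖vtm - mtm‖² + E[‖N‖² | mF]`. Then
`‖N‖² ≤ 2β² ‖g - mt‖² + 2(1 - β)² ‖(g - h) - (mt - mtm)‖²`, and the conditional variance of `g - h`
is at most its conditional second moment.
-/

open MeasureTheory

theorem norm_smul_add_smul_sq_le {E : Type*} [SeminormedAddCommGroup E] [NormedSpace ℝ E]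
    (a b : ℝ) (x y : E) :
    ‖a • x + b • y‖ ^ 2 ≤ 2 * a ^ 2 * ‖x‖ ^ 2 + 2 * b ^ 2 * ‖y‖ ^ 2 :=
  calc ‖a • x + b • y‖ ^ 2 ≤ (‖a • x‖ + ‖b • y‖) ^ 2 := by gcongr; exact norm_add_le _ _
    _ ≤ 2 * (‖a • x‖ ^ 2 + ‖b • y‖ ^ 2) := add_sq_le
    _ = 2 * a ^ 2 * ‖x‖ ^ 2 + 2 * b ^ 2 * ‖y‖ ^ 2 := by
      rw [norm_smul, norm_smul, mul_pow, mul_pow, Real.norm_eq_abs, Real.norm_eq_abs, sq_abs,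
        sq_abs]
      ring

namespace MeasureTheory

section NormedSpace

variable {Ω E : Type*} {m m0 : MeasurableSpace Ω} {μ : Measure Ω} [NormedAddCommGroup E]

theorem MemLp.integrable_norm_sq {X : Ω → E} (hX : MemLp X 2 μ) :
    Integrable (fun ω => ‖X ω‖ ^ 2) μ :=
  MemLp.integrable_norm_pow (p := 2) (by simpa using hX) two_ne_zero

variable [NormedSpace ℝ E]

theorem condExp_norm_smul_add_smul_sq_le {X Y : Ω → E} (a b : ℝ) (hX : MemLp X 2 μ)
    (hY : MemLp Y 2 μ) :
    μ[fun ω => ‖a • X ω + b • Y ω‖ ^ 2 | m] ≤ᵐ[μ] fun ω =>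
      2 * a ^ 2 * μ[fun ω => ‖X ω‖ ^ 2 | m] ω + 2 * b ^ 2 * μ[fun ω => ‖Y ω‖ ^ 2 | m] ω := by
  have hX2 := hX.integrable_norm_sq
  have hY2 := hY.integrable_norm_sq
  have hbound : μ[fun ω => ‖a • X ω + b • Y ω‖ ^ 2 | m] ≤ᵐ[μ]
      μ[(2 * a ^ 2) • (fun ω => ‖X ω‖ ^ 2) + (2 * b ^ 2) • (fun ω => ‖Y ω‖ ^ 2) | m] :=
    condExp_mono ((hX.const_smul a).add (hY.const_smul b)).integrable_norm_sq
      ((hX2.smul _).add (hY2.smul _))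
      (.of_forall fun ω => norm_smul_add_smul_sq_le a b (X ω) (Y ω))
  filter_upwards [hbound, condExp_add (hX2.smul (2 * a ^ 2)) (hY2.smul (2 * b ^ 2)) m,
    condExp_smul (2 * a ^ 2) (fun ω => ‖X ω‖ ^ 2) m,
    condExp_smul (2 * b ^ 2) (fun ω => ‖Y ω‖ ^ 2) m] with ω hω hadd hXa hYb
  simpa [hadd, hXa, hYb] using hω

variable [CompleteSpace E]

theorem condExp_smul_add_smul_ae_eq_zero {X Y : Ω → E} (a b : ℝ) (hX : Integrable X μ)
    (hY : Integrable Y μ) (hX0 : μ[X | m] =ᵐ[μ] 0) (hY0 : μ[Y | m] =ᵐ[μ] 0) :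
    μ[fun ω => a • X ω + b • Y ω | m] =ᵐ[μ] 0 := by
  change μ[a • X + b • Y | m] =ᵐ[μ] 0
  filter_upwards [condExp_add (hX.smul a) (hY.smul b) m, condExp_smul a X m,
    condExp_smul b Y m, hX0, hY0] with ω hadd hXa hYb hXω hYω
  simp [hadd, hXa, hYb, hXω, hYω]

variable [IsFiniteMeasure μ]

theorem condExp_sub_ae_eq_zero {Y c : Ω → E} (hm : m ≤ m0) (hcm : StronglyMeasurable[m] c)
    (hc : Integrable c μ) (hY : Integrable Y μ) (hYc : μ[Y | m] =ᵐ[μ] c) :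
    μ[fun ω => Y ω - c ω | m] =ᵐ[μ] 0 := by
  change μ[Y - c | m] =ᵐ[μ] 0
  filter_upwards [condExp_sub hY hc m, hYc] with ω hsub hYω
  simp [hsub, hYω, condExp_of_stronglyMeasurable hm hcm hc]

end NormedSpace

section InnerProductSpace

variable {Ω E : Type*} {m m0 : MeasurableSpace Ω} {μ : Measure Ω}
  [NormedAddCommGroup E] [InnerProductSpace ℝ E]

theorem MemLp.integrable_inner {X Y : Ω → E} (hX : MemLp X 2 μ) (hY : MemLp Y 2 μ) :
    Integrable (fun ω => inner ℝ (X ω) (Y ω)) μ :=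
  memLp_one_iff_integrable.1 ((innerSL ℝ).memLp_of_bilin 1 hX hY)

variable [CompleteSpace E] [IsFiniteMeasure μ]

/-- The cross term vanishes because `X` can be pulled out of `μ[⟪X, Y⟫ | m]`. -/
theorem condExp_norm_add_sq_of_stronglyMeasurable_left {X Y : Ω → E} (hm : m ≤ m0)
    (hXm : StronglyMeasurable[m] X) (hX : MemLp X 2 μ) (hY : MemLp Y 2 μ)
    (hY0 : μ[Y | m] =ᵐ[μ] 0) :
    μ[fun ω => ‖X ω + Y ω‖ ^ 2 | m] =ᵐ[μ] fun ω => ‖X ω‖ ^ 2 + μ[fun ω => ‖Y ω‖ ^ 2 | m] ω := by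
  have hXY := hX.integrable_inner hY
  have hX2 : μ[fun ω => ‖X ω‖ ^ 2 | m] = fun ω => ‖X ω‖ ^ 2 :=
    condExp_of_stronglyMeasurable hm (hXm.norm.pow 2) hX.integrable_norm_sq
  have hcross : μ[fun ω => inner ℝ (X ω) (Y ω) | m] =ᵐ[μ] 0 := by
    filter_upwards [condExp_bilin_of_stronglyMeasurable_left (innerSL ℝ) hXm hXY
      (hY.integrable one_le_two), hY0] with ω hω hY0ω
    rwa [hY0ω, Pi.zero_apply, map_zero] at hω
  have hexpand : (fun ω => ‖X ω + Y ω‖ ^ 2) = (fun ω => ‖X ω‖ ^ 2 : Ω → ℝ) +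
      (2 : ℝ) • (fun ω => inner ℝ (X ω) (Y ω) : Ω → ℝ) + (fun ω => ‖Y ω‖ ^ 2 : Ω → ℝ) := by
    ext ω
    simp [norm_add_sq_real]
  rw [hexpand]
  filter_upwards [condExp_add (hX.integrable_norm_sq.add (hXY.smul (2 : ℝ)))
      hY.integrable_norm_sq m,
    condExp_add hX.integrable_norm_sq (hXY.smul (2 : ℝ)) m,
    condExp_smul (2 : ℝ) (fun ω => inner ℝ (X ω) (Y ω)) m, hcross] with ω hadd₁ hadd₂ hsmul h0
  simp [hadd₁, hadd₂, hsmul, h0, hX2]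

theorem condExp_norm_sq_smul_add_centered_le {X U V : Ω → E} (a b c : ℝ) (hm : m ≤ m0)
    (hXm : StronglyMeasurable[m] X) (hX : MemLp X 2 μ) (hU : MemLp U 2 μ) (hV : MemLp V 2 μ)
    (hU0 : μ[U | m] =ᵐ[μ] 0) (hV0 : μ[V | m] =ᵐ[μ] 0) :
    ∀ᵐ ω ∂μ, μ[fun ω => ‖a • X ω + (b • U ω + c • V ω)‖ ^ 2 | m] ω ≤
      a ^ 2 * ‖X ω‖ ^ 2 + 2 * b ^ 2 * μ[fun ω => ‖U ω‖ ^ 2 | m] ω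
        + 2 * c ^ 2 * μ[fun ω => ‖V ω‖ ^ 2 | m] ω := by
  have hnoise0 := condExp_smul_add_smul_ae_eq_zero b c (hU.integrable one_le_two)
    (hV.integrable one_le_two) hU0 hV0
  filter_upwards [condExp_norm_add_sq_of_stronglyMeasurable_left (X := fun ω => a • X ω)
      (Y := fun ω => b • U ω + c • V ω) hm (hXm.const_smul a)
      (hX.const_smul a) ((hU.const_smul b).add (hV.const_smul c)) hnoise0,
    condExp_norm_smul_add_smul_sq_le (m := m) b c hU hV] with ω hpyth hnoise
  rw [hpyth, norm_smul, mul_pow, Real.norm_eq_abs, sq_abs]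
  linarith

theorem condExp_norm_sub_sq_le {Y c : Ω → E} (hm : m ≤ m0) (hcm : StronglyMeasurable[m] c)
    (hc : MemLp c 2 μ) (hY : MemLp Y 2 μ) (hYc : μ[Y | m] =ᵐ[μ] c) :
    μ[fun ω => ‖Y ω - c ω‖ ^ 2 | m] ≤ᵐ[μ] μ[fun ω => ‖Y ω‖ ^ 2 | m] := by
  have hcentered := condExp_sub_ae_eq_zero hm hcm (hc.integrable one_le_two)
    (hY.integrable one_le_two) hYc
  filter_upwards [condExp_norm_add_sq_of_stronglyMeasurable_left hm hcm hc (hY.sub hc) hcentered]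
    with ω hω
  simp only [Pi.sub_apply, add_sub_cancel] at hω
  rw [hω]
  exact le_add_of_nonneg_left (sq_nonneg _)

end InnerProductSpace

end MeasureTheory

theorem stmt_12_general {Ω : Type*} {mF m0 : MeasurableSpace Ω} (hm : mF ≤ m0)
    (μ : Measure Ω) [IsProbabilityMeasure μ] {p : ℕ}
    (β : ℝ)
    (g h mt mtm vtm v : Ω → EuclideanSpace ℝ (Fin p))
    (hgL2 : MemLp g 2 μ) (hhL2 : MemLp h 2 μ)
    (hmtL2 : MemLp mt 2 μ) (hmtmL2 : MemLp mtm 2 μ) (hvtmL2 : MemLp vtm 2 μ)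
    (hmt : StronglyMeasurable[mF] mt) (hmtm : StronglyMeasurable[mF] mtm)
    (hvtm : StronglyMeasurable[mF] vtm)
    (hmean : μ[g | mF] =ᵐ[μ] mt)
    (hdiffmean : μ[fun ω => g ω - h ω | mF] =ᵐ[μ] fun ω => mt ω - mtm ω)
    (hv : v = fun ω => β • g ω + (1 - β) • (g ω - h ω + vtm ω)) :
    ∀ᵐ ω ∂μ,
      (μ[fun ω' => ‖v ω' - mt ω'‖ ^ 2 | mF]) ω
        ≤ (1 - β) ^ 2 * ‖vtm ω - mtm ω‖ ^ 2
          + 2 * β ^ 2 * (μ[fun ω' => ‖g ω' - mt ω'‖ ^ 2 | mF]) ω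
          + 2 * (1 - β) ^ 2 * (μ[fun ω' => ‖g ω' - h ω'‖ ^ 2 | mF]) ω := by
  have hD : MemLp (fun ω => g ω - h ω) 2 μ := hgL2.sub hhL2
  have hc : MemLp (fun ω => mt ω - mtm ω) 2 μ := hmtL2.sub hmtmL2
  have hcm : StronglyMeasurable[mF] fun ω => mt ω - mtm ω := hmt.sub hmtm
  have hsplit : (fun ω => ‖v ω - mt ω‖ ^ 2) = fun ω => ‖(1 - β) • (vtm ω - mtm ω) +
      (β • (g ω - mt ω) + (1 - β) • (g ω - h ω - (mt ω - mtm ω)))‖ ^ 2 := by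
    subst hv
    ext ω
    congr 2
    module
  have hgc := condExp_sub_ae_eq_zero hm hmt (hmtL2.integrable one_le_two)
    (hgL2.integrable one_le_two) hmean
  have hDc := condExp_sub_ae_eq_zero hm hcm (hc.integrable one_le_two)
    (hD.integrable one_le_two) hdiffmean
  rw [hsplit]
  filter_upwards [condExp_norm_sq_smul_add_centered_le (X := fun ω => vtm ω - mtm ω)
      (U := fun ω => g ω - mt ω) (V := fun ω => g ω - h ω - (mt ω - mtm ω)) (1 - β) β (1 - β)
      hm (hvtm.sub hmtm) (hvtmL2.sub hmtmL2) (hgL2.sub hmtL2) (hD.sub hc) hgc hDc,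
    condExp_norm_sub_sq_le hm hcm hc hD hdiffmean] with ω hrec hvar
  have := mul_le_mul_of_nonneg_left hvar (by positivity : (0 : ℝ) ≤ 2 * (1 - β) ^ 2)
  linarith

theorem stmt_12 {Ω : Type*} {mF m0 : MeasurableSpace Ω} (hm : mF ≤ m0)
    (μ : Measure Ω) [IsProbabilityMeasure μ] {p : ℕ}
    (β : ℝ) (hβ0 : 0 < β) (hβ1 : β < 1)
    (g h mt mtm vtm v : Ω → EuclideanSpace ℝ (Fin p))
    (hgL2 : MemLp g 2 μ) (hhL2 : MemLp h 2 μ)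
    (hmtL2 : MemLp mt 2 μ) (hmtmL2 : MemLp mtm 2 μ) (hvtmL2 : MemLp vtm 2 μ)
    (hmt : StronglyMeasurable[mF] mt) (hmtm : StronglyMeasurable[mF] mtm)
    (hvtm : StronglyMeasurable[mF] vtm)
    (hmean : μ[g | mF] =ᵐ[μ] mt)
    (hdiffmean : μ[fun ω => g ω - h ω | mF] =ᵐ[μ] fun ω => mt ω - mtm ω)
    (hv : v = fun ω => β • g ω + (1 - β) • (g ω - h ω + vtm ω)) :
    ∀ᵐ ω ∂μ,
      (μ[fun ω' => ‖v ω' - mt ω'‖ ^ 2 | mF]) ω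
        ≤ (1 - β) ^ 2 * ‖vtm ω - mtm ω‖ ^ 2
          + 2 * β ^ 2 * (μ[fun ω' => ‖g ω' - mt ω'‖ ^ 2 | mF]) ω
          + 2 * (1 - β) ^ 2 * (μ[fun ω' => ‖g ω' - h ω'‖ ^ 2 | mF]) ω :=
  stmt_12_general hm μ β g h mt mtm vtm v hgL2 hhL2 hmtL2 hmtmL2 hvtmL2 hmt hmtm hvtm hmean
    hdiffmean hv
end
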